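/- Let ν be a finite Borel measure on ℝ^k equipped with the ℓ^p-distance, with total mass m. Then for any κ > 0, diam(ν, m − κ) ≤ k^{1/p} · Sep(ν; κ/(2k), κ/(2k)). -/

import Mathlib

open MeasureTheory Metric Set Filter Topology

/-- The distance between two subsets of a metric space. -/
noncomputable def setDist {X : Type*} [PseudoMetricSpace X] (A B : Set X) : ℝ :=
  sInf (Set.image2 dist A B)

/-- The separation distance `Sep(μ; κ₁, κ₂)`. -/
noncomputable def mmSep {X : Type*} [PseudoMetricSpace X] [MeasurableSpace X]
    (μ : Measure X) (κ₁ κ₂ : ℝ) : ℝ :=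
  sSup {r | ∃ A B : Set X, MeasurableSet A ∧ MeasurableSet B ∧
    ENNReal.ofReal κ₁ ≤ μ A ∧ ENNReal.ofReal κ₂ ≤ μ B ∧ r = setDist A B}

/-- The partial diameter `diam(ν, c)`: infimum of diameters of Borel sets of measure `≥ c`. -/
noncomputable def partDiam {Y : Type*} [PseudoMetricSpace Y] [MeasurableSpace Y]
    (ν : Measure Y) (c : ℝ) : ℝ :=
  sInf {r | ∃ A : Set Y, MeasurableSet A ∧ ENNReal.ofReal c ≤ ν A ∧ r = Metric.diam A}

/-- The observable diameter `ObsDiam_Y(X; -κ)`. -/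
noncomputable def obsDiam (Y : Type*) {X : Type*} [PseudoMetricSpace X] [MeasurableSpace X]
    [PseudoMetricSpace Y] [MeasurableSpace Y] (μ : Measure X) (κ : ℝ) : ℝ :=
  sSup {r | ∃ f : X → Y, LipschitzWith 1 f ∧
    r = partDiam (Measure.map f μ) ((μ Set.univ).toReal - κ)}

/-- Borel measurable structure on `PiLp`. -/
noncomputable instance instPiLpMeasurable (p : ENNReal) [Fact (1 ≤ p)] (k : ℕ) :
    MeasurableSpace (PiLp p (fun _ : Fin k => ℝ)) :=
  borel _

instance (p : ENNReal) [Fact (1 ≤ p)] (k : ℕ) :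
    BorelSpace (PiLp p (fun _ : Fin k => ℝ)) :=
  ⟨rfl⟩

/-!
For each coordinate `i` pick a lower quantile `aᵢ` and an upper quantile `bᵢ` of `xᵢ` at level
`c = κ / (2k)`: the half-spaces `{xᵢ ≤ aᵢ}` and `{xᵢ ≥ bᵢ}` have mass `≥ c`, while `{xᵢ < aᵢ}` and
`{xᵢ > bᵢ}` have mass `≤ c`. Coordinates are 1-Lipschitz for the `ℓ^p`-distance, so these two
half-spaces are at distance `≥ bᵢ - aᵢ`, whence `bᵢ - aᵢ ≤ Sep(ν; c, c)`. The box `∏ [aᵢ, bᵢ]`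
misses mass at most `2kc = κ` and has `ℓ^p`-diameter at most `k^{1/p} · Sep(ν; c, c)`.
-/

open scoped ENNReal NNReal

section SetDist

variable {X : Type*} [PseudoMetricSpace X] {A B : Set X}

lemma setDist_nonneg (A B : Set X) : 0 ≤ setDist A B :=
  Real.sInf_nonneg (by rintro _ ⟨x, -, y, -, rfl⟩; exact dist_nonneg)

lemma setDist_le_dist {x y : X} (hx : x ∈ A) (hy : y ∈ B) : setDist A B ≤ dist x y :=
  csInf_le ⟨0, by rintro _ ⟨x, -, y, -, rfl⟩; exact dist_nonneg⟩ (mem_image2_of_mem hx hy)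

lemma le_setDist {r : ℝ} (hA : A.Nonempty) (hB : B.Nonempty)
    (h : ∀ x ∈ A, ∀ y ∈ B, r ≤ dist x y) : r ≤ setDist A B :=
  le_csInf (hA.image2 hB) (by rintro _ ⟨x, hx, y, hy, rfl⟩; exact h x hx y hy)

end SetDist

lemma inter_nonempty_of_measure_compl_lt {X : Type*} [MeasurableSpace X] (ν : Measure X)
    {A s : Set X} (h : ν sᶜ < ν A) : (A ∩ s).Nonempty := by
  by_contra! hA
  exact (measure_mono fun a ha hs => hA.subset ⟨ha, hs⟩).not_gt h

section Separation

variable {X : Type*} [PseudoMetricSpace X] [MeasurableSpace X] (ν : Measure X)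

lemma mmSep_nonneg (κ₁ κ₂ : ℝ) : 0 ≤ mmSep ν κ₁ κ₂ :=
  Real.sSup_nonneg (by rintro _ ⟨A, B, -, -, -, -, rfl⟩; exact setDist_nonneg A B)

variable [OpensMeasurableSpace X] [IsFiniteMeasure ν]

lemma exists_measure_compl_ball_lt (x : X) {ε : ℝ≥0∞} (hε : 0 < ε) :
    ∃ R : ℝ, ν (ball x R)ᶜ < ε := by
  have hlim : Tendsto (fun n : ℕ => ν (ball x n)ᶜ) atTop (𝓝 0) := by
    have := tendsto_measure_iInter_atTop (μ := ν) (s := fun n : ℕ => (ball x n)ᶜ)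
      (fun n => measurableSet_ball.compl.nullMeasurableSet)
      (fun m n hmn => compl_subset_compl.2 (ball_subset_ball (by exact_mod_cast hmn)))
      ⟨0, measure_ne_top ν _⟩
    rwa [← compl_iUnion, iUnion_ball_nat, compl_univ, measure_empty] at this
  obtain ⟨n, hn⟩ := (hlim.eventually_lt_const hε).exists
  exact ⟨n, hn⟩

-- `mmSep` is an `sSup` in `ℝ`, hence junk (`0`) unless this set is bounded above.
lemma bddAbove_setDist_of_measure_ge (x : X) {κ₁ κ₂ : ℝ} (hκ₁ : 0 < κ₁) (hκ₂ : 0 < κ₂) :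
    BddAbove {r | ∃ A B : Set X, MeasurableSet A ∧ MeasurableSet B ∧
      ENNReal.ofReal κ₁ ≤ ν A ∧ ENNReal.ofReal κ₂ ≤ ν B ∧ r = setDist A B} := by
  obtain ⟨R, hR⟩ := exists_measure_compl_ball_lt ν x
    (lt_min (ENNReal.ofReal_pos.2 hκ₁) (ENNReal.ofReal_pos.2 hκ₂))
  refine ⟨2 * R, ?_⟩
  rintro _ ⟨A, B, -, -, hA, hB, rfl⟩
  obtain ⟨a, ha, hax⟩ :=
    inter_nonempty_of_measure_compl_lt ν (hR.trans_le ((min_le_left _ _).trans hA))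
  obtain ⟨b, hb, hbx⟩ :=
    inter_nonempty_of_measure_compl_lt ν (hR.trans_le ((min_le_right _ _).trans hB))
  calc setDist A B ≤ dist a b := setDist_le_dist ha hb
    _ ≤ dist a x + dist b x := dist_triangle_right a b x
    _ ≤ 2 * R := by linarith [mem_ball.1 hax, mem_ball.1 hbx]

lemma setDist_le_mmSep {κ₁ κ₂ : ℝ} (hκ₁ : 0 < κ₁) (hκ₂ : 0 < κ₂) {A B : Set X}
    (hA : MeasurableSet A) (hB : MeasurableSet B)
    (hνA : ENNReal.ofReal κ₁ ≤ ν A) (hνB : ENNReal.ofReal κ₂ ≤ ν B) :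
    setDist A B ≤ mmSep ν κ₁ κ₂ := by
  obtain ⟨x, -⟩ := nonempty_of_measure_ne_zero ((ENNReal.ofReal_pos.2 hκ₁).trans_le hνA).ne'
  exact le_csSup (bddAbove_setDist_of_measure_ge ν x hκ₁ hκ₂) ⟨A, B, hA, hB, hνA, hνB, rfl⟩

lemma sub_le_mmSep_of_lipschitzWith {f : X → ℝ} (hf : LipschitzWith 1 f) {κ₁ κ₂ : ℝ}
    (hκ₁ : 0 < κ₁) (hκ₂ : 0 < κ₂) {a b : ℝ}
    (ha : ENNReal.ofReal κ₁ ≤ ν (f ⁻¹' Iic a)) (hb : ENNReal.ofReal κ₂ ≤ ν (f ⁻¹' Ici b)) :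
    b - a ≤ mmSep ν κ₁ κ₂ := by
  have hf_meas := hf.continuous.measurable
  refine le_trans ?_ (setDist_le_mmSep ν hκ₁ hκ₂ (hf_meas measurableSet_Iic)
    (hf_meas measurableSet_Ici) ha hb)
  refine le_setDist (nonempty_of_measure_ne_zero ((ENNReal.ofReal_pos.2 hκ₁).trans_le ha).ne')
    (nonempty_of_measure_ne_zero ((ENNReal.ofReal_pos.2 hκ₂).trans_le hb).ne') fun x hx y hy => ?_
  calc b - a ≤ f y - f x := sub_le_sub hy hx
    _ ≤ dist (f x) (f y) := by rw [Real.dist_eq, abs_sub_comm]; exact le_abs_self _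
    _ ≤ dist x y := by simpa only [NNReal.coe_one, one_mul] using hf.dist_le_mul x y

end Separation

lemma exists_quantile (μ : Measure ℝ) [IsFiniteMeasure μ] {c : ℝ≥0∞} (hc0 : 0 < c)
    (hc : c < μ univ) : ∃ a, c ≤ μ (Iic a) ∧ μ (Iio a) ≤ c := by
  set S := {t | c ≤ μ (Iic t)}
  have hS_upper {s t : ℝ} (hs : s ∈ S) (hst : s ≤ t) : t ∈ S :=
    hs.trans (measure_mono (Iic_subset_Iic.2 hst))
  have hS : S.Nonempty := by
    obtain ⟨t, ht⟩ := ((tendsto_measure_Iic_atTop μ).eventually_const_lt hc).exists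
    exact ⟨t, ht.le⟩
  have hS_bdd : BddBelow S := by
    have hlim : Tendsto (fun t => μ (Iic t)) atBot (𝓝 0) := by
      have := tendsto_measure_iInter_atBot (μ := μ) (fun t => measurableSet_Iic.nullMeasurableSet)
        (fun _ _ => Iic_subset_Iic.2) ⟨0, measure_ne_top μ _⟩
      rwa [iInter_Iic_eq_empty_iff.2 (by simp), measure_empty] at this
    obtain ⟨t₀, ht₀⟩ := (hlim.eventually_lt_const hc0).exists
    exact ⟨t₀, fun s hs => le_of_not_gt fun hst => (hS_upper hs hst.le).not_gt ht₀⟩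
  refine ⟨sInf S, ?_, ?_⟩
  · have hlim := tendsto_measure_biInter_gt (μ := μ) (s := Iic) (a := sInf S)
      (fun r _ => measurableSet_Iic.nullMeasurableSet) (fun _ _ _ => Iic_subset_Iic.2)
      ⟨sInf S + 1, by linarith, measure_ne_top μ _⟩
    have hIic : ⋂ r > sInf S, Iic r = Iic (sInf S) := by
      ext x
      simp only [mem_iInter, mem_Iic]
      exact ⟨le_of_forall_gt_imp_ge_of_dense, fun hx r hr => hx.trans hr.le⟩
    rw [hIic] at hlim
    refine ge_of_tendsto hlim (eventually_nhdsWithin_of_forall fun r hr => ?_)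
    obtain ⟨s, hs, hsr⟩ := exists_lt_of_csInf_lt hS hr
    exact hS_upper hs hsr.le
  · obtain ⟨u, hu_mono, hu_lt, hu_lim⟩ := exists_seq_strictMono_tendsto (sInf S)
    rw [← iUnion_Iic_eq_Iio_of_lt_of_tendsto hu_lt hu_lim,
      Monotone.measure_iUnion fun m n hmn => Iic_subset_Iic.2 (hu_mono.monotone hmn)]
    refine iSup_le fun n => ?_
    have hn : u n ∉ S := notMem_of_lt_csInf (hu_lt n) hS_bdd
    exact (not_le.1 hn).le

lemma exists_quantiles_of_measurable {X : Type*} [MeasurableSpace X] (ν : Measure X)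
    [IsFiniteMeasure ν] {f : X → ℝ} (hf : Measurable f) {c : ℝ≥0∞} (hc0 : 0 < c)
    (hc : c < ν univ) :
    ∃ a b : ℝ, c ≤ ν (f ⁻¹' Iic a) ∧ c ≤ ν (f ⁻¹' Ici b) ∧ ν (f ⁻¹' Icc a b)ᶜ ≤ 2 * c := by
  obtain ⟨a, ha, ha'⟩ := exists_quantile (ν.map f) hc0
    (by rwa [Measure.map_apply hf .univ, preimage_univ])
  obtain ⟨b, hb, hb'⟩ := exists_quantile (ν.map (-f)) hc0
    (by rwa [Measure.map_apply hf.neg .univ, preimage_univ])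
  rw [Measure.map_apply hf measurableSet_Iic] at ha
  rw [Measure.map_apply hf measurableSet_Iio] at ha'
  rw [Measure.map_apply hf.neg measurableSet_Iic] at hb
  rw [Measure.map_apply hf.neg measurableSet_Iio] at hb'
  have hIci : (-f) ⁻¹' Iic b = f ⁻¹' Ici (-b) := by ext; simp [neg_le]
  have hIoi : (-f) ⁻¹' Iio b = f ⁻¹' Ioi (-b) := by ext; simp [neg_lt]
  refine ⟨a, -b, ha, hIci ▸ hb, ?_⟩
  have hcompl : (f ⁻¹' Icc a (-b))ᶜ ⊆ f ⁻¹' Iio a ∪ f ⁻¹' Ioi (-b) := by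
    intro x hx
    rw [mem_compl_iff, mem_preimage, mem_Icc, not_and_or, not_le, not_le] at hx
    exact hx
  calc ν (f ⁻¹' Icc a (-b))ᶜ ≤ ν (f ⁻¹' Iio a) + ν (f ⁻¹' Ioi (-b)) :=
        (measure_mono hcompl).trans (measure_union_le _ _)
    _ ≤ 2 * c := by rw [two_mul, ← hIoi]; exact add_le_add ha' hb'

lemma diam_iInter_preimage_Icc_le {ι : Type*} [Fintype ι] (p : ℝ≥0∞) [Fact (1 ≤ p)]
    {a b : ι → ℝ} {s : ℝ} (hs : 0 ≤ s) (hab : ∀ i, b i - a i ≤ s) :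
    diam (⋂ i, (fun x : PiLp p (fun _ : ι => ℝ) => x i) ⁻¹' Icc (a i) (b i)) ≤
      (Fintype.card ι : ℝ) ^ (1 / p).toReal * s := by
  refine diam_le_of_forall_dist_le (by positivity) fun x hx y hy => ?_
  simp only [mem_iInter, mem_preimage] at hx hy
  calc dist x y ≤ ((Fintype.card ι : ℝ≥0) ^ (1 / p).toReal : ℝ≥0) *
        dist (WithLp.ofLp x) (WithLp.ofLp y) := (PiLp.antilipschitzWith_ofLp p _).le_mul_dist x y
    _ ≤ _ := by
      push_cast
      gcongr
      exact (dist_pi_le_iff hs).2 fun i => (Real.dist_le_of_mem_Icc (hx i) (hy i)).trans (hab i)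

lemma ofReal_toReal_sub_le_measure {X : Type*} [MeasurableSpace X] (ν : Measure X)
    [IsFiniteMeasure ν] {C : Set X} (hC : MeasurableSet C) {κ : ℝ} (hκ : 0 ≤ κ)
    (h : ν Cᶜ ≤ ENNReal.ofReal κ) : ENNReal.ofReal ((ν univ).toReal - κ) ≤ ν C := by
  rw [ENNReal.ofReal_sub _ hκ, ENNReal.ofReal_toReal (measure_ne_top ν _)]
  calc ν univ - ENNReal.ofReal κ ≤ ν univ - ν Cᶜ := tsub_le_tsub_left h _
    _ = ν C := by rw [← measure_compl hC.compl (measure_ne_top ν _), compl_compl]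

lemma measure_compl_iInter_le_card_mul {X ι : Type*} [MeasurableSpace X] [Fintype ι]
    (ν : Measure X) (s : ι → Set X) {ε : ℝ≥0∞} (h : ∀ i, ν (s i)ᶜ ≤ ε) :
    ν (⋂ i, s i)ᶜ ≤ Fintype.card ι * ε :=
  calc ν (⋂ i, s i)ᶜ ≤ ∑ i, ν (s i)ᶜ := by rw [compl_iInter]; exact measure_iUnion_fintype_le ν _
    _ ≤ ∑ _ : ι, ε := Finset.sum_le_sum fun i _ => h i
    _ = Fintype.card ι * ε := by rw [Finset.sum_const, Finset.card_univ, nsmul_eq_mul]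

lemma natCast_mul_two_mul_ofReal_div_le (k : ℕ) {κ : ℝ} (hκ : 0 ≤ κ) :
    (k : ℝ≥0∞) * (2 * ENNReal.ofReal (κ / (2 * k))) ≤ ENNReal.ofReal κ := by
  rw [← ENNReal.ofReal_ofNat 2, ← ENNReal.ofReal_mul zero_le_two, ← ENNReal.ofReal_natCast,
    ← ENNReal.ofReal_mul k.cast_nonneg]
  refine ENNReal.ofReal_le_ofReal ?_
  rcases k.eq_zero_or_pos with rfl | hk
  · simpa using hκ
  · exact le_of_eq (by field_simp)

lemma partDiam_le_diam {Y : Type*} [PseudoMetricSpace Y] [MeasurableSpace Y] (ν : Measure Y)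
    {c : ℝ} {A : Set Y} (hA : MeasurableSet A) (hνA : ENNReal.ofReal c ≤ ν A) :
    partDiam ν c ≤ diam A :=
  csInf_le ⟨0, by rintro _ ⟨B, -, -, rfl⟩; exact diam_nonneg⟩ ⟨A, hA, hνA, rfl⟩

lemma exists_measurableSet_measure_compl_le_diam_le {ι : Type*} [Fintype ι] (p : ℝ≥0∞)
    [Fact (1 ≤ p)] [MeasurableSpace (PiLp p (fun _ : ι => ℝ))]
    [OpensMeasurableSpace (PiLp p (fun _ : ι => ℝ))] (ν : Measure (PiLp p (fun _ : ι => ℝ)))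
    [IsFiniteMeasure ν] {c : ℝ} (hc : Nonempty ι → 0 < c ∧ ENNReal.ofReal c < ν univ) :
    ∃ C, MeasurableSet C ∧ ν Cᶜ ≤ Fintype.card ι * (2 * ENNReal.ofReal c) ∧
      diam C ≤ (Fintype.card ι : ℝ) ^ (1 / p).toReal * mmSep ν c c := by
  have hcoord (i : ι) : LipschitzWith 1 fun x : PiLp p (fun _ : ι => ℝ) => x i :=
    LipschitzWith.of_dist_le_mul fun x y => by simpa using PiLp.dist_apply_le x y i
  choose a b hA hB htail using fun i => exists_quantiles_of_measurable ν
    (hcoord i).continuous.measurable (ENNReal.ofReal_pos.2 (hc ⟨i⟩).1) (hc ⟨i⟩).2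
  refine ⟨⋂ i, (fun x : PiLp p (fun _ : ι => ℝ) => x i) ⁻¹' Icc (a i) (b i),
    .iInter fun i => (hcoord i).continuous.measurable measurableSet_Icc,
    measure_compl_iInter_le_card_mul ν _ htail,
    diam_iInter_preimage_Icc_le p (mmSep_nonneg ν c c) fun i => ?_⟩
  exact sub_le_mmSep_of_lipschitzWith ν (hcoord i) (hc ⟨i⟩).1 (hc ⟨i⟩).1 (hA i) (hB i)

theorem partDiam_le_pow_mul_sep
    (k : ℕ) (p : ℝ) (hp : 1 ≤ p) [Fact (1 ≤ ENNReal.ofReal p)]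
    (ν : Measure (PiLp (ENNReal.ofReal p) (fun _ : Fin k => ℝ))) [IsFiniteMeasure ν]
    (κ : ℝ) (hκ : 0 < κ) :
    partDiam ν ((ν Set.univ).toReal - κ) ≤
      (k : ℝ) ^ (1 / p) * mmSep ν (κ / (2 * k)) (κ / (2 * k)) := by
  rcases le_or_gt (ν univ).toReal κ with hsmall | hlarge
  · calc partDiam ν _ ≤ diam (∅ : Set _) := partDiam_le_diam ν .empty
          (by simp [ENNReal.ofReal_eq_zero.2 (sub_nonpos.2 hsmall)])
      _ ≤ _ := by rw [diam_empty]; exact mul_nonneg (by positivity) (mmSep_nonneg ν _ _)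
  have hc : Nonempty (Fin k) →
      0 < κ / (2 * k) ∧ ENNReal.ofReal (κ / (2 * k)) < ν univ := fun ⟨i⟩ => by
    have hk : (1 : ℝ) ≤ k := by exact_mod_cast i.pos
    refine ⟨by positivity, ?_⟩
    rw [← ENNReal.ofReal_toReal (measure_ne_top ν univ)]
    refine (ENNReal.ofReal_lt_ofReal_iff (by linarith)).2 ?_
    calc κ / (2 * k) ≤ κ / 2 := by gcongr; linarith
      _ < _ := by linarith
  obtain ⟨C, hC, hCcompl, hCdiam⟩ := exists_measurableSet_measure_compl_le_diam_le _ ν hc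
  rw [Fintype.card_fin] at hCcompl hCdiam
  calc partDiam ν _ ≤ diam C := partDiam_le_diam ν hC (ofReal_toReal_sub_le_measure ν hC hκ.le
        (hCcompl.trans (natCast_mul_two_mul_ofReal_div_le k hκ.le)))
    _ ≤ _ := hCdiam
    _ = _ := by
      rw [one_div, ENNReal.toReal_inv, ENNReal.toReal_ofReal (by linarith), one_div]
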